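/- arXiv:1610.02599 — 4 statements merged into one kernel-verified Lean document; each statement's English description precedes it below -/
import Mathlib

section
/- Let R = k[[x,y]]/(x⁵, xy) over a field k, and let M = R/x³R. Then x·Ext²_R(M, M) ≠ 0. -/
/-!
The module `M = R ⧸ (x³)` has the partial free resolution `R ← R ← R²` with differentials `x³`
and `(x², y)`; continued by any projective resolution of the syzygy module `ker (x², y)`, it
computes `Ext²(M, M)` as degree-two cocycles `R² → M` modulo coboundaries.

The cochain `ξ = (x, 0)` is a cocycle: `x² a + y b = 0` forces `a x² = 0` because `(x) ∩ (y) = 0`,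
so `a ∈ (x³, y)` and `x a ∈ (x³)`. If `x ξ = η ∘ (x², y)`, then `m = η 1` satisfies `y m = 0` and
`x² m = x²` in `M`. The first gives `m ∈ (x)`, again since `(x) ∩ (y) = 0` and `ann y = (x)`,
so `x² m = 0` in `M`, whereas `x² ∉ (x³)`.

The ideal computations in `R` come from `k⟦x, y⟧`, where `(xⁿ, xy) = (xⁿ, y) ∩ (x)` and a power
series lies in `(xⁿ, y)` exactly when its coefficients at `1, x, …, xⁿ⁻¹` vanish.
-/

open CategoryTheory MvPowerSeries

universe u

namespace MvPowerSeries

variable {σ R : Type*} [CommRing R] {s t : σ}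

theorem mem_span_X_pow_X_iff {n : ℕ} {φ : MvPowerSeries σ R} :
    φ ∈ Ideal.span {X s ^ n, X t} ↔ ∀ m : σ →₀ ℕ, m t = 0 → m s < n → coeff m φ = 0 := by
  constructor
  · rintro hφ m hmt hms
    obtain ⟨u, v, rfl⟩ := Ideal.mem_span_pair.1 hφ
    rw [map_add, X_pow_dvd_iff.1 (dvd_mul_left _ u) m hms, X_dvd_iff.1 (dvd_mul_left _ v) m hmt,
      add_zero]
  · intro h
    classical
    let ψ : MvPowerSeries σ R := fun m => if m t = 0 then coeff m φ else 0
    have hψ : X s ^ n ∣ ψ := X_pow_dvd_iff.2 fun m hms => by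
      change ite _ _ _ = _
      split_ifs with hmt
      · exact h m hmt hms
      · rfl
    have hφψ : X t ∣ φ - ψ := X_dvd_iff.2 fun m hmt => by
      change coeff m φ - ite _ _ _ = 0
      rw [if_pos hmt, sub_self]
    obtain ⟨u, hu⟩ := hψ
    obtain ⟨v, hv⟩ := hφψ
    exact Ideal.mem_span_pair.2 ⟨u, v, by rw [mul_comm u, mul_comm v, ← hu, ← hv, add_sub_cancel]⟩

theorem mem_span_X_pow_X_of_mul_X_pow_mem (hst : s ≠ t) {a b : ℕ} {φ : MvPowerSeries σ R}
    (h : φ * X s ^ a ∈ Ideal.span {X s ^ (b + a), X t}) : φ ∈ Ideal.span {X s ^ b, X t} := by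
  rw [mem_span_X_pow_X_iff] at h ⊢
  intro m hmt hms
  have := h (m + Finsupp.single s a) (by simp [hmt, hst]) (by simp; omega)
  rwa [X_pow_eq, coeff_add_mul_monomial, mul_one] at this

theorem X_dvd_of_X_dvd_mul_X (hst : s ≠ t) {φ : MvPowerSeries σ R} (h : X s ∣ φ * X t) :
    X s ∣ φ := by
  rw [X_dvd_iff] at h ⊢
  intro m hms
  have := h (m + Finsupp.single t 1) (by simp [hms, hst])
  rwa [X, coeff_add_mul_monomial, mul_one] at this

theorem X_pow_notMem_span_X_pow_succ_X [Nontrivial R] (hst : s ≠ t) (i : ℕ) :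
    (X s : MvPowerSeries σ R) ^ i ∉ Ideal.span {X s ^ (i + 1), X t} := by
  classical
  intro h
  have := mem_span_X_pow_X_iff.1 h (Finsupp.single s i) (by simp [hst]) (by simp)
  rw [coeff_X_pow, if_pos rfl] at this
  exact one_ne_zero this

theorem span_X_pow_X_mul_X_eq_inf (hst : s ≠ t) {n : ℕ} (hn : n ≠ 0) :
    Ideal.span {X s ^ n, X s * X t} =
      Ideal.span {X s ^ n, X t} ⊓ Ideal.span {(X s : MvPowerSeries σ R)} := by
  obtain ⟨n, rfl⟩ := Nat.exists_eq_add_one_of_ne_zero hn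
  apply le_antisymm
  · rw [le_inf_iff, Ideal.span_le, Ideal.span_le, Set.insert_subset_iff, Set.insert_subset_iff,
      Set.singleton_subset_iff, Set.singleton_subset_iff]
    refine ⟨⟨Ideal.subset_span (by simp), ?_⟩, ?_, ?_⟩
    · exact Ideal.mul_mem_left _ _ (Ideal.subset_span (by simp))
    · exact Ideal.mem_span_singleton.2 (dvd_pow_self _ n.succ_ne_zero)
    · exact Ideal.mem_span_singleton.2 (dvd_mul_right _ _)
  · rintro φ ⟨hφ, hφX⟩
    obtain ⟨ψ, rfl⟩ := Ideal.mem_span_singleton'.1 hφX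
    have hψ : ψ ∈ Ideal.span {X s ^ n, X t} :=
      mem_span_X_pow_X_of_mul_X_pow_mem (a := 1) hst (by rwa [pow_one])
    obtain ⟨u, v, rfl⟩ := Ideal.mem_span_pair.1 hψ
    exact Ideal.mem_span_pair.2 ⟨u, v, by ring⟩

end MvPowerSeries

theorem Ideal.exact_mulLeft_mkQ {A : Type*} [CommRing A] (a : A) :
    Function.Exact (LinearMap.mulLeft A a) (Ideal.span {a}).mkQ := fun c => by
  rw [Submodule.mkQ_apply, Submodule.Quotient.mk_eq_zero, Ideal.mem_span_singleton']
  simp [mul_comm]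

namespace ModuleCat

variable {R : Type u} [CommRing R] {M F₀ F₁ F₂ : Type u}
  [AddCommGroup M] [Module R M] [AddCommGroup F₀] [Module R F₀]
  [AddCommGroup F₁] [Module R F₁] [AddCommGroup F₂] [Module R F₂]

namespace SplicedResolution

variable (d₂ : F₂ →ₗ[R] F₁)

noncomputable abbrev tail : ProjectiveResolution (of R (LinearMap.ker d₂)) :=
  ProjectiveResolution.of _

variable (F₀) in
noncomputable def obj : ℕ → ModuleCat.{u} R
  | 0 => of R F₀
  | 1 => of R F₁
  | 2 => of R F₂
  | n + 3 => (tail d₂).complex.X n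

variable (d₁ : F₁ →ₗ[R] F₀)

noncomputable def d : ∀ n, obj F₀ d₂ (n + 1) ⟶ obj F₀ d₂ n
  | 0 => ofHom d₁
  | 1 => ofHom d₂
  | 2 => (tail d₂).π.f 0 ≫ ofHom (LinearMap.ker d₂).subtype
  | n + 3 => (tail d₂).complex.d (n + 1) n

theorem d_comp_d (h : d₁ ∘ₗ d₂ = 0) : ∀ n, d d₂ d₁ (n + 1) ≫ d d₂ d₁ n = 0
  | 0 => hom_ext h
  | 1 => by
    ext z
    exact ((tail d₂).π.f 0 z).2
  | 2 => (tail d₂).complex_d_comp_π_f_zero_assoc _ |>.trans Limits.zero_comp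
  | n + 3 => (tail d₂).complex.d_comp_d _ _ _

noncomputable def complex (h : d₁ ∘ₗ d₂ = 0) : ChainComplex (ModuleCat.{u} R) ℕ :=
  ChainComplex.of _ _ (d_comp_d d₂ d₁ h)

variable {d₂ d₁}

theorem complex_d (h : d₁ ∘ₗ d₂ = 0) (n : ℕ) : (complex d₂ d₁ h).d (n + 1) n = d d₂ d₁ n :=
  ChainComplex.of_d _ _ _

variable (π : F₀ →ₗ[R] M)

noncomputable def toSingle₀ (h : d₁ ∘ₗ d₂ = 0) (hπ : π ∘ₗ d₁ = 0) :
    complex d₂ d₁ h ⟶ (ChainComplex.single₀ _).obj (of R M) :=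
  (ChainComplex.toSingle₀Equiv _ _).symm ⟨ofHom π, by rw [complex_d]; exact hom_ext hπ⟩

theorem complex_exactAt_succ (h₁ : Function.Exact d₂ d₁) (n : ℕ) :
    (complex d₂ d₁ h₁.linearMap_comp_eq_zero).ExactAt (n + 1) := by
  rw [HomologicalComplex.exactAt_iff' _ (n + 2) (n + 1) n (by simp) (by simp),
    ShortComplex.moduleCat_exact_iff]
  intro c hc
  dsimp [HomologicalComplex.sc', HomologicalComplex.shortComplexFunctor'] at c hc ⊢
  rw [complex_d] at hc ⊢
  match n with
  | 0 => exact (h₁ c).1 hc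
  | 1 =>
    obtain ⟨z, hz⟩ := (ModuleCat.epi_iff_surjective ((tail d₂).π.f 0)).1 inferInstance ⟨c, hc⟩
    exact ⟨z, congrArg Subtype.val hz⟩
  | 2 =>
    exact (ShortComplex.moduleCat_exact_iff _).1 (tail d₂).exact₀ c (Subtype.ext hc)
  | n + 3 => exact (ShortComplex.moduleCat_exact_iff _).1 ((tail d₂).exact_succ n) c hc

theorem quasiIsoAt_toSingle₀_zero (hπ : Function.Surjective π) (h₀ : Function.Exact d₁ π)
    (h : d₁ ∘ₗ d₂ = 0) : QuasiIsoAt (toSingle₀ π h h₀.linearMap_comp_eq_zero) 0 := by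
  rw [ChainComplex.quasiIsoAt₀_iff, ShortComplex.quasiIso_iff_of_zeros' _ rfl rfl rfl]
  constructor
  · rw [ShortComplex.moduleCat_exact_iff]
    intro c hc
    dsimp [HomologicalComplex.shortComplexFunctor', toSingle₀] at c hc ⊢
    simp only [complex_d]
    exact (h₀ c).1 hc
  · exact (ModuleCat.epi_iff_surjective _).2 hπ

variable [Module.Projective R F₀] [Module.Projective R F₁] [Module.Projective R F₂]

instance (h : d₁ ∘ₗ d₂ = 0) (n : ℕ) : Projective ((complex d₂ d₁ h).X n) :=
  match n with
  | 0 => projective_of_categoryTheory_projective (of R F₀)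
  | 1 => projective_of_categoryTheory_projective (of R F₁)
  | 2 => projective_of_categoryTheory_projective (of R F₂)
  | n + 3 => (tail d₂).projective n

end SplicedResolution

open SplicedResolution in
noncomputable def splicedResolution [Module.Projective R F₀] [Module.Projective R F₁]
    [Module.Projective R F₂] {π : F₀ →ₗ[R] M} {d₁ : F₁ →ₗ[R] F₀} {d₂ : F₂ →ₗ[R] F₁}
    (hπ : Function.Surjective π) (h₀ : Function.Exact d₁ π) (h₁ : Function.Exact d₂ d₁) :
    ProjectiveResolution (of R M) where
  complex := complex d₂ d₁ h₁.linearMap_comp_eq_zero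
  π := toSingle₀ π _ h₀.linearMap_comp_eq_zero
  quasiIso := ⟨fun
    | 0 => quasiIsoAt_toSingle₀_zero π hπ h₀ _
    | n + 1 => (quasiIsoAt_iff_exactAt' _ _ (ChainComplex.exactAt_succ_single_obj _ _)).2
        (complex_exactAt_succ h₁ n)⟩

section ExtTwo

variable {N : Type u} [AddCommGroup N] [Module R N]
  [Module.Projective R F₀] [Module.Projective R F₁] [Module.Projective R F₂]
  {π : F₀ →ₗ[R] M} {d₁ : F₁ →ₗ[R] F₀} {d₂ : F₂ →ₗ[R] F₁}
  (hπ : Function.Surjective π) (h₀ : Function.Exact d₁ π) (h₁ : Function.Exact d₂ d₁)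

variable (N) in
noncomputable abbrev extTwoHomComplex : ShortComplex (ModuleCat.{u} R) :=
  ((splicedResolution hπ h₀ h₁).complex.linearYonedaObj R (of R N)).sc' 1 2 3

variable (N) in
noncomputable def extTwoIso :
    ((Ext R (ModuleCat.{u} R) 2).obj (Opposite.op (of R M))).obj (of R N) ≅
    of R (LinearMap.ker (extTwoHomComplex N hπ h₀ h₁).g.hom ⧸
      LinearMap.range (extTwoHomComplex N hπ h₀ h₁).moduleCatToCycles) :=
  (splicedResolution hπ h₀ h₁).isoExt 2 (of R N) ≪≫
    HomologicalComplex.homologyIsoSc' _ 1 2 3 (by simp) (by simp) ≪≫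
    (extTwoHomComplex N hπ h₀ h₁).moduleCatHomologyIso

theorem extTwoHomComplex_g_ofHom {ξ : F₂ →ₗ[R] N} (hξ : LinearMap.ker d₂ ≤ LinearMap.ker ξ) :
    (extTwoHomComplex N hπ h₀ h₁).g
      (ofHom ξ : (splicedResolution hπ h₀ h₁).complex.X 2 ⟶ of R N) = 0 := by
  change SplicedResolution.d d₂ d₁ 2 ≫ ofHom ξ = 0
  ext z
  exact hξ ((SplicedResolution.tail d₂).π.f 0 z).2

noncomputable def extTwoClass (ξ : F₂ →ₗ[R] N) (hξ : LinearMap.ker d₂ ≤ LinearMap.ker ξ) :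
    ((Ext R (ModuleCat.{u} R) 2).obj (Opposite.op (of R M))).obj (of R N) :=
  (extTwoIso N hπ h₀ h₁).inv (Submodule.Quotient.mk ⟨_, extTwoHomComplex_g_ofHom hπ h₀ h₁ hξ⟩)

theorem smul_extTwoClass (r : R) (ξ : F₂ →ₗ[R] N) (hξ : LinearMap.ker d₂ ≤ LinearMap.ker ξ) :
    r • extTwoClass hπ h₀ h₁ ξ hξ =
      extTwoClass hπ h₀ h₁ (r • ξ) fun _ hz => by
        rw [LinearMap.mem_ker, LinearMap.smul_apply, hξ hz, smul_zero] := by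
  rw [extTwoClass, ← map_smul, ← Submodule.Quotient.mk_smul]
  rfl

theorem exists_comp_eq_of_extTwoClass_eq_zero {ξ : F₂ →ₗ[R] N}
    {hξ : LinearMap.ker d₂ ≤ LinearMap.ker ξ} (h : extTwoClass hπ h₀ h₁ ξ hξ = 0) :
    ∃ η : F₁ →ₗ[R] N, η ∘ₗ d₂ = ξ := by
  have hq := congrArg (extTwoIso N hπ h₀ h₁).hom h
  rw [extTwoClass, Iso.inv_hom_id_apply, map_zero, Submodule.Quotient.mk_eq_zero] at hq
  obtain ⟨η, hη⟩ := hq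
  have hη' : ofHom d₂ ≫ η = ofHom ξ := congrArg Subtype.val hη
  exact ⟨η.hom, congrArg Hom.hom hη'⟩

theorem exists_smul_ne_zero_ext_two (hπ : Function.Surjective π) (h₀ : Function.Exact d₁ π)
    (h₁ : Function.Exact d₂ d₁) (ξ : F₂ →ₗ[R] N) (hξ : LinearMap.ker d₂ ≤ LinearMap.ker ξ) (r : R)
    (hr : ∀ η : F₁ →ₗ[R] N, η ∘ₗ d₂ ≠ r • ξ) :
    ∃ e : ((Ext R (ModuleCat.{u} R) 2).obj (Opposite.op (of R M))).obj (of R N), r • e ≠ 0 := by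
  refine ⟨extTwoClass hπ h₀ h₁ ξ hξ, fun h => ?_⟩
  rw [smul_extTwoClass] at h
  obtain ⟨η, hη⟩ := exists_comp_eq_of_extTwoClass_eq_zero hπ h₀ h₁ h
  exact hr η hη

end ExtTwo

end ModuleCat

abbrev QuotXnXY (k : Type*) [CommRing k] (n : ℕ) : Type _ :=
  MvPowerSeries (Fin 2) k ⧸ Ideal.span {(X 0 : MvPowerSeries (Fin 2) k) ^ n, X 0 * X 1}

namespace QuotXnXY

variable {k : Type*} [CommRing k] {n : ℕ}

local notation "mk" =>
  Ideal.Quotient.mk (Ideal.span {(X 0 : MvPowerSeries (Fin 2) k) ^ n, X 0 * X 1})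

variable (k n) in
noncomputable def x : QuotXnXY k n := mk (X 0)

variable (k n) in
noncomputable def y : QuotXnXY k n := mk (X 1)

theorem x_mul_y : x k n * y k n = 0 :=
  Ideal.Quotient.eq_zero_iff_mem.2 (Ideal.subset_span (by simp))

theorem x_pow_eq_zero : x k n ^ n = 0 :=
  Ideal.Quotient.eq_zero_iff_mem.2 (Ideal.subset_span (by simp))

theorem mk_mem_span_x_pow_y_iff {b : ℕ} (hb : b ≤ n) {F : MvPowerSeries (Fin 2) k} :
    mk F ∈ Ideal.span {x k n ^ b, y k n} ↔ F ∈ Ideal.span {X 0 ^ b, X 1} := by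
  have hle : Ideal.span {(X 0 : MvPowerSeries (Fin 2) k) ^ n, X 0 * X 1} ≤
      Ideal.span {X 0 ^ b, X 1} := by
    rw [Ideal.span_le, Set.insert_subset_iff, Set.singleton_subset_iff]
    exact ⟨Ideal.mem_span_pair.2 ⟨X 0 ^ (n - b), 0, by rw [← pow_add]; simp [hb]⟩,
      Ideal.mul_mem_left _ _ (Ideal.subset_span (by simp))⟩
  rw [← Ideal.mem_quotient_iff_mem hle, Ideal.map_span, Set.image_pair, map_pow]
  rfl

theorem mk_mem_span_x_iff (hn : n ≠ 0) {F : MvPowerSeries (Fin 2) k} :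
    mk F ∈ Ideal.span {x k n} ↔ F ∈ Ideal.span {X 0} := by
  have hle : Ideal.span {(X 0 : MvPowerSeries (Fin 2) k) ^ n, X 0 * X 1} ≤ Ideal.span {X 0} := by
    rw [Ideal.span_le, Set.insert_subset_iff, Set.singleton_subset_iff]
    exact ⟨Ideal.mem_span_singleton.2 (dvd_pow_self _ hn),
      Ideal.mem_span_singleton.2 (dvd_mul_right _ _)⟩
  rw [← Ideal.mem_quotient_iff_mem hle, Ideal.map_span, Set.image_singleton]
  rfl

theorem mul_x_eq_zero_of_mul_x_eq_mul_y (hn : n ≠ 0) {z w : QuotXnXY k n}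
    (h : z * x k n = w * y k n) : z * x k n = 0 := by
  obtain ⟨Z, rfl⟩ := Ideal.Quotient.mk_surjective z
  have hZX : Z * X 0 ∈ Ideal.span {X 0 ^ n, X 1} := by
    rw [← mk_mem_span_x_pow_y_iff le_rfl, map_mul]
    exact h ▸ Ideal.mul_mem_left _ _ (Ideal.subset_span (by simp))
  change mk (Z * X 0) = 0
  rw [Ideal.Quotient.eq_zero_iff_mem, span_X_pow_X_mul_X_eq_inf (by decide) hn]
  exact ⟨hZX, Ideal.mem_span_singleton.2 (dvd_mul_left _ _)⟩

theorem mem_span_x_pow_y_of_mul_x_pow_eq_zero {a b : ℕ} (hab : b + a = n) {c : QuotXnXY k n}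
    (h : c * x k n ^ a = 0) : c ∈ Ideal.span {x k n ^ b, y k n} := by
  obtain ⟨C, rfl⟩ := Ideal.Quotient.mk_surjective c
  rw [mk_mem_span_x_pow_y_iff (by omega)]
  refine mem_span_X_pow_X_of_mul_X_pow_mem (a := a) (by decide) ?_
  rw [hab, ← mk_mem_span_x_pow_y_iff le_rfl, map_mul, map_pow]
  exact h ▸ zero_mem _

theorem mem_span_x_of_mul_y_eq_zero (hn : n ≠ 0) {c : QuotXnXY k n} (h : c * y k n = 0) :
    c ∈ Ideal.span {x k n} := by
  obtain ⟨C, rfl⟩ := Ideal.Quotient.mk_surjective c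
  rw [mk_mem_span_x_iff hn, Ideal.mem_span_singleton] at *
  refine X_dvd_of_X_dvd_mul_X (t := 1) (by decide) ?_
  rw [← Ideal.mem_span_singleton, ← mk_mem_span_x_iff hn, map_mul]
  exact h ▸ zero_mem _

theorem x_pow_notMem_span_x_pow_succ [Nontrivial k] {i : ℕ} (hi : i < n) :
    x k n ^ i ∉ Ideal.span {x k n ^ (i + 1)} := by
  intro h
  refine X_pow_notMem_span_X_pow_succ_X (R := k) (by decide) i ((mk_mem_span_x_pow_y_iff hi).1 ?_)
  rw [map_pow]
  exact Ideal.span_mono (by simp) h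

theorem exact_coprod_mulLeft_mulLeft {a b : ℕ} (ha : a ≠ 0) (hab : b + a = n) :
    Function.Exact
      ((LinearMap.mulLeft (QuotXnXY k n) (x k n ^ b)).coprod (LinearMap.mulLeft _ (y k n)))
      (LinearMap.mulLeft (QuotXnXY k n) (x k n ^ a)) := fun c => by
  constructor
  · intro hc
    obtain ⟨u, v, huv⟩ := Ideal.mem_span_pair.1
      (mem_span_x_pow_y_of_mul_x_pow_eq_zero hab (c := c) (by rw [mul_comm]; exact hc))
    exact ⟨(u, v), by simp [← huv, mul_comm]⟩
  · rintro ⟨⟨u, v⟩, rfl⟩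
    obtain ⟨a, rfl⟩ := Nat.exists_eq_add_one_of_ne_zero ha
    calc x k n ^ (a + 1) * (x k n ^ b * u + y k n * v)
        = x k n ^ (b + (a + 1)) * u + x k n ^ a * (x k n * y k n) * v := by ring
      _ = 0 := by rw [hab, x_pow_eq_zero, x_mul_y]; ring

theorem ker_coprod_mulLeft_le_ker_mkQ_comp :
    LinearMap.ker ((LinearMap.mulLeft _ (x k 5 ^ 2)).coprod (LinearMap.mulLeft _ (y k 5))) ≤
      LinearMap.ker ((Ideal.span {x k 5 ^ 3}).mkQ ∘ₗ LinearMap.mulLeft _ (x k 5) ∘ₗ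
        LinearMap.fst _ _ (QuotXnXY k 5)) := by
  intro ⟨a, b⟩ h
  replace h : x k 5 ^ 2 * a + y k 5 * b = 0 := h
  refine (Submodule.Quotient.mk_eq_zero _).2 (?_ : x k 5 * a ∈ Ideal.span {x k 5 ^ 3})
  have hax : a * x k 5 * x k 5 = -b * y k 5 := by linear_combination h
  have ha : a * x k 5 ^ 2 = 0 := by
    rw [sq, ← mul_assoc]
    exact mul_x_eq_zero_of_mul_x_eq_mul_y (by norm_num) hax
  obtain ⟨u, v, rfl⟩ :=
    Ideal.mem_span_pair.1 (mem_span_x_pow_y_of_mul_x_pow_eq_zero (b := 3) (by norm_num) ha)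
  exact Ideal.mem_span_singleton'.2 ⟨u * x k 5, by linear_combination (-v) * x_mul_y (k := k)⟩

theorem x_sq_smul_ne_mk_x_sq [Nontrivial k] {m : QuotXnXY k 5 ⧸ Ideal.span {x k 5 ^ 3}}
    (hm : y k 5 • m = 0) : x k 5 ^ 2 • m ≠ Submodule.Quotient.mk (x k 5 ^ 2) := by
  obtain ⟨m, rfl⟩ := Submodule.Quotient.mk_surjective _ m
  rw [← Submodule.Quotient.mk_smul, Submodule.Quotient.mk_eq_zero, Ideal.mem_span_singleton']
    at hm
  obtain ⟨t, ht⟩ := hm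
  have hzx : t * x k 5 ^ 2 * x k 5 = m * y k 5 := by linear_combination ht
  have hmy : m * y k 5 = 0 := hzx ▸ mul_x_eq_zero_of_mul_x_eq_mul_y (by norm_num) hzx
  obtain ⟨s, rfl⟩ := Ideal.mem_span_singleton'.1 (mem_span_x_of_mul_y_eq_zero (by norm_num) hmy)
  intro h
  rw [← Submodule.Quotient.mk_smul, eq_comm, Submodule.Quotient.eq, smul_eq_mul] at h
  refine x_pow_notMem_span_x_pow_succ (k := k) (n := 5) (i := 2) (by norm_num) ?_
  have hs : x k 5 ^ 2 * (s * x k 5) ∈ Ideal.span {x k 5 ^ 3} :=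
    Ideal.mem_span_singleton'.2 ⟨s, by ring⟩
  simpa using Ideal.add_mem _ h hs

theorem comp_coprod_ne_x_smul [Nontrivial k]
    (η : QuotXnXY k 5 →ₗ[QuotXnXY k 5] QuotXnXY k 5 ⧸ Ideal.span {x k 5 ^ 3}) :
    η ∘ₗ (LinearMap.mulLeft _ (x k 5 ^ 2)).coprod (LinearMap.mulLeft _ (y k 5)) ≠
      x k 5 • ((Ideal.span {x k 5 ^ 3}).mkQ ∘ₗ LinearMap.mulLeft _ (x k 5) ∘ₗ
        LinearMap.fst _ _ (QuotXnXY k 5)) := by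
  intro h
  have hy : y k 5 • η 1 = 0 := by
    rw [← map_smul, smul_eq_mul, mul_one]
    simpa using LinearMap.congr_fun h (0, 1)
  have hx : x k 5 ^ 2 • η 1 = Submodule.Quotient.mk (x k 5 ^ 2) := by
    have := LinearMap.congr_fun h (1, 0)
    simp only [LinearMap.comp_apply, LinearMap.coprod_apply, LinearMap.mulLeft_apply, mul_one,
      mul_zero, add_zero, LinearMap.smul_apply, LinearMap.fst_apply, Submodule.mkQ_apply] at this
    rw [← map_smul, smul_eq_mul, mul_one, this, ← Submodule.Quotient.mk_smul, smul_eq_mul, sq]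
  exact x_sq_smul_ne_mk_x_sq hy hx

end QuotXnXY

/-- for `R = k[[x,y]]/(x⁵, xy)` and `M = R/x³R`, multiplication by `x` on
`Ext²_R(M, M)` is nonzero. -/
theorem stmt7 (k : Type) [Field k] :
    letI P := MvPowerSeries (Fin 2) k
    letI X : P := MvPowerSeries.X 0
    letI Y : P := MvPowerSeries.X 1
    letI I : Ideal P := Ideal.span {X ^ 5, X * Y}
    letI R := P ⧸ I
    letI x : R := Ideal.Quotient.mk I X
    letI M := R ⧸ Ideal.span {x ^ 3}
    ∃ e : ((Ext R (ModuleCat R) 2).obj (Opposite.op (ModuleCat.of R M))).obj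
      (ModuleCat.of R M), x • e ≠ 0 := by
  refine ModuleCat.exists_smul_ne_zero_ext_two (Submodule.mkQ_surjective _)
    (Ideal.exact_mulLeft_mkQ _) (QuotXnXY.exact_coprod_mulLeft_mulLeft three_ne_zero rfl) _ ?_
    (QuotXnXY.x k 5) QuotXnXY.comp_coprod_ne_x_smul
  exact QuotXnXY.ker_coprod_mulLeft_le_ker_mkQ_comp
end

section
/- Let R = k[[x,y]]/(x⁵, xy) over a field k and M = R/x³R. Then y·Ext²_R(M, M) = 0. -/
/-!
If `r • 𝟙 A` factors through a projective object `Q`, then on a projective resolution `P` of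
`A` the chain map `r • 𝟙 P` is homotopic to a lift of this factorization, which passes through
the resolution of `Q` concentrated in degree `0`. Applying `Hom(-, B)` and taking homology, `r`
acts by zero on `Ext^{n+1}(A, B)`. For `R/(a)` with `y * a = 0`, multiplication by `y` factors as
`R/(a) → R → R/(a)`; here `y * x³ = (x * y) * x² = 0`.
-/

open CategoryTheory Limits

namespace HomologicalComplex

variable {C : Type*} [Category* C] [Preadditive C] {ι : Type*} {c : ComplexShape ι}
  {K L : HomologicalComplex C c}

lemma homologyMap_smul {R : Type*} [Semiring R] [Linear R C] (a : R) (φ : K ⟶ L) (i : ι)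
    [K.HasHomology i] [L.HasHomology i] :
    homologyMap (a • φ) i = a • homologyMap φ i :=
  ShortComplex.homologyMap_smul ((shortComplexFunctor C c i).map φ) a

lemma homologyMap_eq_zero_of_f_eq_zero (φ : K ⟶ L) (i : ι) [K.HasHomology i]
    [L.HasHomology i] (h : φ.f i = 0) : homologyMap φ i = 0 := by
  have hcycles : cyclesMap φ i = 0 := by
    rw [← cancel_mono (L.iCycles i), cyclesMap_i, h, comp_zero, zero_comp]
  rw [← cancel_epi (K.homologyπ i), homologyπ_naturality, hcycles, zero_comp, comp_zero]

end HomologicalComplex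

namespace ChainComplex

variable {C : Type*} [Category* C] [Abelian C] {X Y : ChainComplex C ℕ}

noncomputable def linearYonedaObjMap (φ : X ⟶ Y) (R : Type*) [Ring R] [Linear R C] (B : C) :
    Y.linearYonedaObj R B ⟶ X.linearYonedaObj R B :=
  (HomologicalComplex.unopFunctor _ _).map
    ((((linearYoneda R C).obj B).rightOp.mapHomologicalComplex _).map φ).op

noncomputable def _root_.Homotopy.linearYonedaObjMap {φ ψ : X ⟶ Y} (h : Homotopy φ ψ)
    (R : Type*) [Ring R] [Linear R C] (B : C) :
    Homotopy (linearYonedaObjMap φ R B) (linearYonedaObjMap ψ R B) :=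
  (((linearYoneda R C).obj B).rightOp.mapHomotopy h).unop

lemma linearYonedaObjMap_smul_id {R : Type*} [CommRing R] [Linear R C] (r : R) (B : C) :
    linearYonedaObjMap (r • 𝟙 X) R B = r • 𝟙 (X.linearYonedaObj R B) := by
  ext i (c : X.X i ⟶ B)
  change (r • 𝟙 (X.X i)) ≫ c = r • c
  rw [Linear.smul_comp, Category.id_comp]

lemma linearYonedaObjMap_f_eq_zero (φ : X ⟶ Y) (R : Type*) [Ring R] [Linear R C] (B : C)
    {i : ℕ} (h : φ.f i = 0) : (linearYonedaObjMap φ R B).f i = 0 := by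
  ext (c : Y.X i ⟶ B)
  change φ.f i ≫ c = 0
  rw [h, zero_comp]

end ChainComplex

section

variable {R : Type*} [CommRing R] {C : Type*} [Category* C] [Abelian C] [Linear R C]

lemma CategoryTheory.ProjectiveResolution.smul_id_comp_π {A : C} (P : ProjectiveResolution A)
    (r : R) :
    (r • 𝟙 P.complex) ≫ P.π = P.π ≫ (ChainComplex.single₀ C).map (r • 𝟙 A) := by
  ext
  simp only [HomologicalComplex.comp_f, HomologicalComplex.smul_f_apply,
    ChainComplex.single₀_map_f_zero, Linear.smul_comp, Category.id_comp]
  -- the codomain of `P.π.f 0` is only defeq to `A`, so `Linear.comp_smul` is applied by hand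
  exact ((Linear.comp_smul _ _ A (P.π.f 0) r (𝟙 A)).trans
    (congrArg _ (Category.comp_id _))).symm

lemma Ext.smul_eq_zero_of_smul_id_eq_comp [EnoughProjectives C] {A Q : C} [Projective Q]
    (f : A ⟶ Q) (g : Q ⟶ A) (r : R) (hfg : f ≫ g = r • 𝟙 A) (B : C) (n : ℕ)
    (e : ((Ext R C (n + 1)).obj (Opposite.op A)).obj B) : r • e = 0 := by
  let P := ProjectiveResolution.of A
  let Q' := ProjectiveResolution.self Q
  let φ := ProjectiveResolution.lift f P Q' ≫ ProjectiveResolution.lift g Q' P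
  have H : Homotopy (r • 𝟙 P.complex) φ :=
    ProjectiveResolution.liftHomotopy (f ≫ g) _ _ (hfg ▸ P.smul_id_comp_π r) (by simp [φ])
  have hφ : φ.f (n + 1) = 0 := by
    have hQ : IsZero (Q'.complex.X (n + 1)) :=
      HomologicalComplex.isZero_single_obj_X _ 0 Q (n + 1) (by simp)
    rw [HomologicalComplex.comp_f, hQ.eq_of_tgt ((ProjectiveResolution.lift f P Q').f (n + 1)) 0,
      zero_comp]
  have hK : r • 𝟙 ((P.complex.linearYonedaObj R B).homology (n + 1)) = 0 := by
    rw [← HomologicalComplex.homologyMap_id, ← HomologicalComplex.homologyMap_smul,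
      ← ChainComplex.linearYonedaObjMap_smul_id, (H.linearYonedaObjMap R B).homologyMap_eq]
    exact HomologicalComplex.homologyMap_eq_zero_of_f_eq_zero _ _
      (ChainComplex.linearYonedaObjMap_f_eq_zero φ R B hφ)
  let iso := P.isoExt (R := R) (n + 1) B
  apply (ModuleCat.mono_iff_injective iso.hom).1 inferInstance
  simpa using congrArg (fun ψ => ψ.hom (iso.hom e)) hK

end

lemma Ext.smul_eq_zero_of_mul_eq_zero {R : Type*} [CommRing R] {a y : R} (h : y * a = 0)
    (B : ModuleCat R) (n : ℕ)
    (e : ((Ext R (ModuleCat R) (n + 1)).obj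
      (Opposite.op (ModuleCat.of R (R ⧸ Ideal.span {a})))).obj B) : y • e = 0 := by
  refine Ext.smul_eq_zero_of_smul_id_eq_comp (Q := ModuleCat.of R R)
    (ModuleCat.ofHom (Submodule.liftQSpanSingleton a (LinearMap.lsmul R R y) (by simpa using h)))
    (ModuleCat.ofHom (Ideal.span {a}).mkQ) y ?_ B n e
  ext
  rfl

/-- for `R = k[[x,y]]/(x⁵, xy)` and `M = R/x³R`, multiplication by `y`
annihilates `Ext²_R(M, M)`. -/
theorem stmt8 (k : Type) [Field k] :
    letI P := MvPowerSeries (Fin 2) k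
    letI X : P := MvPowerSeries.X 0
    letI Y : P := MvPowerSeries.X 1
    letI I : Ideal P := Ideal.span {X ^ 5, X * Y}
    letI R := P ⧸ I
    letI x : R := Ideal.Quotient.mk I X
    letI y : R := Ideal.Quotient.mk I Y
    letI M := R ⧸ Ideal.span {x ^ 3}
    ∀ e : ((Ext R (ModuleCat R) 2).obj (Opposite.op (ModuleCat.of R M))).obj
      (ModuleCat.of R M), y • e = 0 := by
  intro e
  refine Ext.smul_eq_zero_of_mul_eq_zero ?_ _ 1 e
  rw [← map_pow, ← map_mul, Ideal.Quotient.eq_zero_iff_mem,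
    show (MvPowerSeries.X 1 * MvPowerSeries.X 0 ^ 3 : MvPowerSeries (Fin 2) k) =
      MvPowerSeries.X 0 * MvPowerSeries.X 1 * MvPowerSeries.X 0 ^ 2 by ring]
  exact Ideal.mul_mem_right _ _ (Ideal.subset_span (by simp))
end

section
/- Let R = ℂ[[x,y,z]]/(xy, x(x⁴−z⁴)) and I = (x³, z)R. Then I² = zI, and I/I² is isomorphic as an R/I-module to the direct sum (R/I) ⊕ R/(I + (x², y)). -/
/-!
Since `xy = 0` and `x⁵ = xz⁴` in `R`, we get `x⁶ = z · x²z³`, so `I² = (x⁶, x³z, z²) = zI`.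
The map `R² → I/I²`, `(a, b) ↦ za + x³b` is onto, and `za + x³b ∈ I² = zI` reduces to a
syzygy `za' + x³b = 0` with `a' ≡ a mod I`. Lifted to `ℂ[[x,y,z]]` this says
`Az + Bx³ ∈ (xy, x(x⁴ - z⁴))`; comparing coefficients against monomial ideals shows
`A ∈ (x³, z, xy)` and `B ∈ (x², y, z)`, so the kernel is `I × (I + (x², y))`.
-/

namespace MvPowerSeries

variable {σ R : Type*} [CommSemiring R]

theorem monomial_one_dvd_of_le {n : σ →₀ ℕ} {F : MvPowerSeries σ R}
    (hF : ∀ m, coeff m F ≠ 0 → n ≤ m) : monomial n 1 ∣ F := by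
  let G : MvPowerSeries σ R := fun m => coeff (m + n) F
  refine ⟨G, ext fun m => ?_⟩
  rw [coeff_monomial_mul, one_mul]
  split_ifs with h
  · exact congrArg (coeff · F) (tsub_add_cancel_of_le h).symm
  · by_contra hne
    exact h (hF m hne)

theorem coeff_eq_zero_of_mem_ideal_span_monomial_image {S : Set (σ →₀ ℕ)}
    {F : MvPowerSeries σ R} (hF : F ∈ Ideal.span ((fun s => monomial s (1 : R)) '' S))
    {m : σ →₀ ℕ} (hm : ∀ n ∈ S, ¬n ≤ m) : coeff m F = 0 := by
  classical
  induction hF using Submodule.span_induction generalizing m with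
  | mem G hG =>
    obtain ⟨n, hn, rfl⟩ := hG
    rw [coeff_monomial, if_neg fun h => hm n hn h.ge]
  | zero => exact map_zero _
  | add G H _ _ hG hH => rw [map_add, hG hm, hH hm, add_zero]
  | smul c G _ hG =>
    rw [smul_eq_mul, coeff_mul]
    refine Finset.sum_eq_zero fun p hp => ?_
    rw [hG fun n hn hle => hm n hn (hle.trans ?_), mul_zero]
    exact le_of_add_le_right (Finset.HasAntidiagonal.mem_antidiagonal.mp hp).le

theorem mem_ideal_span_monomial_image_of_le {S : Finset (σ →₀ ℕ)} {F : MvPowerSeries σ R}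
    (hF : ∀ m, coeff m F ≠ 0 → ∃ n ∈ S, n ≤ m) :
    F ∈ Ideal.span ((fun s => monomial s (1 : R)) '' S) := by
  classical
  induction S using Finset.induction_on generalizing F with
  | empty =>
    rw [show F = 0 from ext fun m => by_contra fun hm => by simpa using hF m hm]
    exact zero_mem _
  | insert n S _ ih =>
    let G : MvPowerSeries σ R := fun m => if n ≤ m then coeff m F else 0
    let H : MvPowerSeries σ R := fun m => if n ≤ m then 0 else coeff m F
    have hGH : F = G + H := ext fun m => by
      change coeff m F = (if n ≤ m then coeff m F else 0) + (if n ≤ m then 0 else coeff m F)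
      split_ifs <;> simp
    rw [hGH, Finset.coe_insert, Set.image_insert_eq, Ideal.span_insert]
    refine add_mem (Ideal.mem_sup_left ?_) (Ideal.mem_sup_right (ih fun m hm => ?_))
    · refine Ideal.mem_span_singleton.mpr (monomial_one_dvd_of_le fun m hm => ?_)
      by_contra h
      exact hm (if_neg h)
    · change (if n ≤ m then 0 else coeff m F) ≠ 0 at hm
      split_ifs at hm with hnm
      · exact absurd rfl hm
      obtain ⟨k, hk, hkm⟩ := hF m hm
      rcases Finset.mem_insert.mp hk with rfl | hk
      · exact absurd hkm hnm
      · exact ⟨k, hk, hkm⟩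

theorem mem_ideal_span_monomial_image_of_mul_monomial_mem {S T : Finset (σ →₀ ℕ)}
    {F : MvPowerSeries σ R} {k : σ →₀ ℕ}
    (hF : F * monomial k 1 ∈ Ideal.span ((fun s => monomial s (1 : R)) '' T))
    (hST : ∀ m, (∀ n ∈ S, ¬n ≤ m) → ∀ n ∈ T, ¬n ≤ m + k) :
    F ∈ Ideal.span ((fun s => monomial s (1 : R)) '' S) := by
  refine mem_ideal_span_monomial_image_of_le fun m hm => ?_
  by_contra! hS
  refine hm ?_
  rw [← mul_one (coeff m F), ← coeff_add_mul_monomial]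
  exact coeff_eq_zero_of_mem_ideal_span_monomial_image hF (hST m hS)

end MvPowerSeries

theorem Ideal.nonempty_cotangent_equiv_prod_of_eq_span_pair {R : Type*} [CommRing R]
    {I N₁ N₂ : Ideal R} {f g : R} (hI : I = Ideal.span {f, g})
    (h : ∀ a b, f * a + g * b ∈ I ^ 2 ↔ a ∈ N₁ ∧ b ∈ N₂) :
    Nonempty (I.Cotangent ≃ₗ[R] (R ⧸ N₁) × (R ⧸ N₂)) := by
  have hf : f ∈ I := hI ▸ Ideal.subset_span (by simp)
  have hg : g ∈ I := hI ▸ Ideal.subset_span (by simp)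
  let ψ : R × R →ₗ[R] I := LinearMap.codRestrict I
    (f • LinearMap.fst R R R + g • LinearMap.snd R R R)
    fun v => add_mem (I.mul_mem_right _ hf) (I.mul_mem_right _ hg)
  let φ : R × R →ₗ[R] I.Cotangent := I.toCotangent ∘ₗ ψ
  have hφ : Function.Surjective φ := by
    intro c
    obtain ⟨⟨w, hw⟩, rfl⟩ := I.toCotangent_surjective c
    obtain ⟨a, b, rfl⟩ := Ideal.mem_span_pair.mp (hI ▸ hw)
    exact ⟨(a, b), congrArg I.toCotangent (Subtype.ext (by simp [ψ, mul_comm]))⟩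
  let π : R × R →ₗ[R] (R ⧸ N₁) × (R ⧸ N₂) := LinearMap.prodMap N₁.mkQ N₂.mkQ
  have hπ : Function.Surjective π :=
    Function.Surjective.prodMap N₁.mkQ_surjective N₂.mkQ_surjective
  have hker : LinearMap.ker φ = LinearMap.ker π := by
    ext v
    rw [LinearMap.mem_ker, LinearMap.comp_apply, Ideal.toCotangent_eq_zero, LinearMap.ker_prodMap,
      Submodule.ker_mkQ, Submodule.ker_mkQ, Submodule.mem_prod]
    exact h v.1 v.2
  exact ⟨(φ.quotKerEquivOfSurjective hφ).symm ≪≫ₗ Submodule.quotEquivOfEq _ _ hker ≪≫ₗ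
    π.quotKerEquivOfSurjective hπ⟩

namespace CotangentExample

open MvPowerSeries Finsupp

abbrev P := MvPowerSeries (Fin 3) ℂ

noncomputable def J : Ideal P := Ideal.span {X 0 * X 1, X 0 * (X 0 ^ 4 - X 2 ^ 4)}

theorem mem_span_of_mul_X_add_mul_X_pow_mem {A B : P} (h : A * X 2 + B * X 0 ^ 3 ∈ J) :
    A ∈ Ideal.span {X 0 ^ 3, X 2, X 0 * X 1} ∧ B ∈ Ideal.span {X 0 ^ 2, X 1, X 2} := by
  obtain ⟨c, d, hcd⟩ := Ideal.mem_span_pair.mp h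
  have hA : A * X 2 ∈ Ideal.span {X 0 ^ 3, X 0 * X 1, X 0 * X 2 ^ 4} := by
    rw [show A * X 2 = c * (X 0 * X 1) + (d * X 0 ^ 2) * X 0 ^ 3 - d * (X 0 * X 2 ^ 4)
      - B * X 0 ^ 3 by linear_combination -hcd]
    refine sub_mem (sub_mem (add_mem ?_ ?_) ?_) ?_ <;>
      exact Ideal.mul_mem_left _ _ (Ideal.subset_span (by simp))
  have hB : B * X 0 ^ 3 ∈ Ideal.span {X 1, X 2, X 0 ^ 5} := by
    rw [show B * X 0 ^ 3 = c * X 0 * X 1 + d * X 0 ^ 5 - d * X 0 * X 2 ^ 3 * X 2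
      - A * X 2 by linear_combination -hcd]
    refine sub_mem (sub_mem (add_mem ?_ ?_) ?_) ?_ <;>
      exact Ideal.mul_mem_left _ _ (Ideal.subset_span (by simp))
  simp only [X_pow_eq] at hA hB ⊢
  simp only [X_def, monomial_mul_monomial, mul_one] at hA hB ⊢
  have hA' := mem_ideal_span_monomial_image_of_mul_monomial_mem (F := A) (k := single 2 1)
    (S := {single 0 3, single 2 1, single 0 1 + single 1 1})
    (T := {single 0 3, single 0 1 + single 1 1, single 0 1 + single 2 4})
  have hB' := mem_ideal_span_monomial_image_of_mul_monomial_mem (F := B) (k := single 0 3)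
    (S := {single 0 2, single 1 1, single 2 1}) (T := {single 1 1, single 2 1, single 0 5})
  simp only [Finset.coe_insert, Finset.coe_singleton, Set.image_insert_eq,
    Set.image_singleton] at hA' hB'
  refine ⟨hA' hA fun m hm => ?_, hB' hB fun m hm => ?_⟩ <;>
  · simp only [Finset.mem_insert, Finset.mem_singleton, forall_eq_or_imp, forall_eq, le_def,
      Fin.forall_fin_succ, Fin.succ_zero_eq_one, Fin.succ_one_eq_two, IsEmpty.forall_iff,
      and_true, coe_add, Pi.add_apply, single_apply, Fin.isValue, Fin.reduceEq, ↓reduceIte,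
      not_and, not_le] at hm ⊢
    omega

abbrev R := P ⧸ J

noncomputable def x : R := Ideal.Quotient.mk J (X 0)
noncomputable def y : R := Ideal.Quotient.mk J (X 1)
noncomputable def z : R := Ideal.Quotient.mk J (X 2)

noncomputable def I : Ideal R := Ideal.span {x ^ 3, z}

theorem x_mul_y : x * y = 0 :=
  Ideal.Quotient.eq_zero_iff_mem.mpr (Ideal.subset_span (by simp))

theorem x_pow_five : x ^ 5 = x * z ^ 4 := by
  have h : x * (x ^ 4 - z ^ 4) = 0 :=
    Ideal.Quotient.eq_zero_iff_mem.mpr (Ideal.subset_span (by simp))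
  linear_combination h

theorem x_pow_three_mem_I : x ^ 3 ∈ I := Ideal.subset_span (by simp)

theorem z_mem_I : z ∈ I := Ideal.subset_span (by simp)

theorem I_mul_self_eq_span_z_mul : I * I = Ideal.span {z} * I := by
  refine le_antisymm ?_ (Ideal.mul_mono_left ((Ideal.span_singleton_le_iff_mem _).mpr z_mem_I))
  rw [show I * I = _ from Ideal.span_pair_mul_span_pair _ _ _ _, Ideal.span_le]
  simp only [Set.insert_subset_iff, Set.singleton_subset_iff, SetLike.mem_coe,
    Ideal.mem_span_singleton_mul]
  refine ⟨⟨x ^ 2 * z ^ 3, I.mul_mem_left _ (I.pow_mem_of_mem z_mem_I 3 three_pos), ?_⟩,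
    ⟨x ^ 3, x_pow_three_mem_I, mul_comm _ _⟩, ⟨x ^ 3, x_pow_three_mem_I, rfl⟩, ⟨z, z_mem_I, rfl⟩⟩
  linear_combination -x * x_pow_five

theorem mem_of_z_mul_add_x_pow_three_mul_mem_sq {a b : R} (h : z * a + x ^ 3 * b ∈ I ^ 2) :
    a ∈ I ∧ b ∈ I + Ideal.span {x ^ 2, y} := by
  rw [sq, I_mul_self_eq_span_z_mul, Ideal.mem_span_singleton_mul] at h
  obtain ⟨w, hw, hzw⟩ := h
  obtain ⟨A, hA⟩ := Ideal.Quotient.mk_surjective (a - w)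
  obtain ⟨B, rfl⟩ := Ideal.Quotient.mk_surjective b
  have hJ : A * X 2 + B * X 0 ^ 3 ∈ J := by
    rw [← Ideal.Quotient.eq_zero_iff_mem, map_add, map_mul, map_mul, map_pow, hA]
    change (a - w) * z + _ * x ^ 3 = 0
    linear_combination -hzw
  obtain ⟨hA', hB'⟩ := mem_span_of_mul_X_add_mul_X_pow_mem hJ
  constructor
  · rw [← sub_add_cancel a w, ← hA]
    refine add_mem ((Ideal.map_le_iff_le_comap.mpr ?_) (Ideal.mem_map_of_mem _ hA')) hw
    simp only [Ideal.span_le, Set.insert_subset_iff, Set.singleton_subset_iff, SetLike.mem_coe,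
      Ideal.mem_comap, map_mul, map_pow]
    exact ⟨x_pow_three_mem_I, z_mem_I, (x_mul_y ▸ zero_mem I : x * y ∈ I)⟩
  · refine (Ideal.map_le_iff_le_comap.mpr ?_) (Ideal.mem_map_of_mem _ hB')
    simp only [Ideal.span_le, Set.insert_subset_iff, Set.singleton_subset_iff, SetLike.mem_coe,
      Ideal.mem_comap, map_pow]
    exact ⟨Ideal.mem_sup_right (Ideal.subset_span (Set.mem_insert _ _)),
      Ideal.mem_sup_right (Ideal.subset_span (Set.mem_insert_of_mem _ rfl)),
      Ideal.mem_sup_left z_mem_I⟩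

theorem x_pow_three_mul_mem_sq {b : R} (hb : b ∈ I + Ideal.span {x ^ 2, y}) :
    x ^ 3 * b ∈ I ^ 2 := by
  obtain ⟨i, hi, s, hs, rfl⟩ := Submodule.mem_sup.mp hb
  obtain ⟨p, q, rfl⟩ := Ideal.mem_span_pair.mp hs
  rw [sq, show x ^ 3 * (i + (p * x ^ 2 + q * y)) = x ^ 3 * i + (p * x * z ^ 2 * z) * z by
    linear_combination p * x_pow_five + q * x ^ 2 * x_mul_y]
  exact add_mem (Ideal.mul_mem_mul x_pow_three_mem_I hi)
    (Ideal.mul_mem_mul (I.mul_mem_left _ z_mem_I) z_mem_I)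

theorem z_mul_add_x_pow_three_mul_mem_sq_iff (a b : R) :
    z * a + x ^ 3 * b ∈ I ^ 2 ↔ a ∈ I ∧ b ∈ I + Ideal.span {x ^ 2, y} :=
  ⟨mem_of_z_mul_add_x_pow_three_mul_mem_sq, fun ⟨ha, hb⟩ =>
    add_mem (sq I ▸ Ideal.mul_mem_mul z_mem_I ha) (x_pow_three_mul_mem_sq hb)⟩

theorem nonempty_cotangent_equiv :
    Nonempty (I.Cotangent ≃ₗ[R] (R ⧸ I) × (R ⧸ (I + Ideal.span {x ^ 2, y}))) :=
  Ideal.nonempty_cotangent_equiv_prod_of_eq_span_pair (congrArg Ideal.span (Set.pair_comm _ _))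
    z_mul_add_x_pow_three_mul_mem_sq_iff

end CotangentExample

/-- for `R = ℂ[[x,y,z]]/(xy, x(x⁴−z⁴))` and `I = (x³, z) ⊆ R` one has
`I² = zI`, and `I/I²` is isomorphic to `(R/I) ⊕ R/(I + (x², y))`. -/
theorem stmt18 :
    letI P := MvPowerSeries (Fin 3) ℂ
    letI X : P := MvPowerSeries.X 0
    letI Y : P := MvPowerSeries.X 1
    letI Z : P := MvPowerSeries.X 2
    letI J : Ideal P := Ideal.span {X * Y, X * (X ^ 4 - Z ^ 4)}
    letI R := P ⧸ J
    letI x : R := Ideal.Quotient.mk J X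
    letI y : R := Ideal.Quotient.mk J Y
    letI z : R := Ideal.Quotient.mk J Z
    letI I : Ideal R := Ideal.span {x ^ 3, z}
    I * I = Ideal.span {z} * I ∧
    Nonempty (I.Cotangent ≃ₗ[R] ((R ⧸ I) × (R ⧸ (I + Ideal.span {x ^ 2, y})))) :=
  ⟨CotangentExample.I_mul_self_eq_span_z_mul, CotangentExample.nonempty_cotangent_equiv⟩
end

section
/- Let A be a commutative ring, Λ an A-algebra with multiplication map μ: Λ^e → Λ where Λ^e = Λ⊗_A Λ^op. If the kernel of μ can be generated by n elements as a Λ^e-module, then 𝔫_A(Λ)^n ⊆ 𝔨_A(Λ) ⊆ 𝔫_A(Λ), where 𝔨_A(Λ) = Fitt⁰_Λ(Ω_{Λ/A}) is the Kähler different and 𝔫_A(Λ) the Noether different (with Λ commutative). -/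
open TensorProduct

/-- The `j`-th Fitting ideal of an `R`-module `M`: the ideal generated by the
`(n-j) × (n-j)` minors of relation matrices on generating families of `M`. -/
noncomputable def fittingIdeal (R : Type*) [CommRing R] (j : ℕ)
    (M : Type*) [AddCommGroup M] [Module R M] : Ideal R :=
  Ideal.span {d | ∃ (n : ℕ) (g : Fin (j + n) → M) (B : Matrix (Fin n) (Fin (j + n)) R)
    (c : Fin n → Fin (j + n)), Submodule.span R (Set.range g) = ⊤ ∧
    (∀ i, ∑ l, B i l • g l = 0) ∧ d = (B.submatrix id c).det}

/-- The Noether different of a commutative `A`-algebra `S`: the image under the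
multiplication map `μ : S ⊗[A] S → S` of the annihilator of `ker μ`; this is the image of
`Hom_{S⊗S}(S, S⊗S) → Hom_{S⊗S}(S, S) = S`. -/
noncomputable def noetherDifferent (A S : Type*) [CommRing A] [CommRing S]
    [Algebra A S] : Ideal S :=
  Ideal.map (Algebra.TensorProduct.lmul' A (S := S)).toRingHom
    (Submodule.annihilator
      (RingHom.ker (Algebra.TensorProduct.lmul' A (S := S)).toRingHom))

/-- The Kähler different of a commutative `A`-algebra `S` is the `0`-th Fitting ideal of
the module of Kähler differentials. -/
noncomputable def kaehlerDifferent (A S : Type*) [CommRing A] [CommRing S]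
    [Algebra A S] : Ideal S :=
  fittingIdeal S 0 (Ω[S⁄A])

/-!
Write `J = ker μ`, so that `Ω[S⁄A] = J/J²` and `S ⊗[A] S` acts on it through `μ`. Hence `ann J`
maps into the annihilator of `Ω[S⁄A]`, and `n` generators of `J` give `n` generators of
`Ω[S⁄A]`; since diagonal relation matrices show that the annihilator of an `n`-generated module
has its `n`-th power inside the `0`-th Fitting ideal, `𝔫ⁿ ⊆ 𝔨`.

Conversely, let `B` be a square relation matrix for generators `g` of `Ω[S⁄A]`, and lift `g` to
`y` in `J`. With `x` generating `J`, the relations `B y ∈ J² = J·(x)` and `x ∈ (y) + J²` assemble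
into a block matrix `N = [[B, -C], [-Q, 1 - R]]` with `C, R ≡ 0 mod J` that kills the vector
`(y, x)`. By the determinant trick `det N` annihilates `J`, and `μ (det N) = det B`, so `𝔨 ⊆ 𝔫`.
-/

open Matrix

section FittingIdeal

variable {R M : Type*} [CommRing R] [AddCommGroup M] [Module R M]

theorem prod_mem_fittingIdeal_zero {n : ℕ} (x : Fin n → M)
    (hx : Submodule.span R (Set.range x) = ⊤) (σ : Fin n → R) (hσ : ∀ i, σ i • x i = 0) :
    ∏ i, σ i ∈ fittingIdeal R 0 M := by
  let e : Fin (0 + n) ≃ Fin n := finCongr (zero_add n)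
  refine Ideal.subset_span ⟨n, x ∘ e, (diagonal σ).submatrix id e, e.symm, ?_, fun i => ?_, ?_⟩
  · rw [Set.range_comp, e.range_eq_univ, Set.image_univ, hx]
  · refine (e.sum_comp fun l => diagonal σ i l • x l).trans ?_
    simp [diagonal_apply, hσ]
  · simp [submatrix_submatrix]

theorem annihilator_pow_le_fittingIdeal_zero {n : ℕ} (x : Fin n → M)
    (hx : Submodule.span R (Set.range x) = ⊤) :
    Module.annihilator R M ^ n ≤ fittingIdeal R 0 M := by
  rw [Submodule.pow_eq_span_pow_set, Submodule.span_le]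
  intro a ha
  obtain ⟨σ, rfl⟩ := Set.mem_pow.mp ha
  rw [List.prod_ofFn]
  exact prod_mem_fittingIdeal_zero x hx _ fun i => Module.mem_annihilator.mp (σ i).2 (x i)

theorem fittingIdeal_zero_le {I : Ideal R}
    (h : ∀ (m : ℕ) (g : Fin m → M), Submodule.span R (Set.range g) = ⊤ →
      ∀ B : Matrix (Fin m) (Fin m) R, (∀ i, ∑ l, B i l • g l = 0) → B.det ∈ I) :
    fittingIdeal R 0 M ≤ I := by
  refine Ideal.span_le.mpr ?_
  rintro _ ⟨m, g, B, c, hg, hB, rfl⟩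
  by_cases hc : Function.Injective c
  · let e : Fin m ≃ Fin (0 + m) := Equiv.ofBijective c
      ((Fintype.bijective_iff_injective_and_card c).mpr ⟨hc, by simp⟩)
    refine h m (g ∘ e) ?_ (B.submatrix id e) fun i => ?_
    · rw [Set.range_comp, e.range_eq_univ, Set.image_univ, hg]
    · exact (e.sum_comp fun l => B i l • g l).trans (hB i)
  · obtain ⟨i, j, hcij, hij⟩ := Function.not_injective_iff.mp hc
    rw [SetLike.mem_coe, det_zero_of_column_eq hij fun k => by simp [hcij]]
    exact I.zero_mem

end FittingIdeal

section DeterminantTrick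

variable {T : Type*} [CommRing T]

theorem Ideal.exists_dotProduct_eq_of_mem_mul_span {ι : Type*} [Fintype ι] {I : Ideal T}
    {x : ι → T} {z : T} (hz : z ∈ I * Ideal.span (Set.range x)) :
    ∃ c : ι → T, (∀ k, c k ∈ I) ∧ c ⬝ᵥ x = z := by
  rw [← Ideal.smul_eq_mul] at hz
  obtain ⟨a, ha, rfl⟩ := (Submodule.mem_ideal_smul_span_iff_exists_sum I x z).mp hz
  exact ⟨a, ha, by simp [Finsupp.sum_fintype, dotProduct]⟩

theorem Matrix.det_mul_eq_zero_of_mulVec_eq_zero {n : Type*} [Fintype n] [DecidableEq n]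
    {N : Matrix n n T} {v : n → T} (h : N *ᵥ v = 0) (i : n) : N.det * v i = 0 := by
  simpa [adjugate_mul, smul_mulVec] using congr((N.adjugate *ᵥ $h) i)

theorem Matrix.det_fromBlocks_one_sub_sub_det_mem {m n : Type*} [Fintype m] [Fintype n]
    [DecidableEq m] [DecidableEq n] {J : Ideal T} (A : Matrix m m T) {B : Matrix m n T}
    (C : Matrix n m T) {D : Matrix n n T} (hB : ∀ i j, B i j ∈ J) (hD : ∀ i j, D i j ∈ J) :
    (fromBlocks A B C (1 - D)).det - A.det ∈ J := by
  have hB0 : B.map (Ideal.Quotient.mk J) = 0 := by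
    ext i j; exact Ideal.Quotient.eq_zero_iff_mem.mpr (hB i j)
  have hD0 : D.map (Ideal.Quotient.mk J) = 0 := by
    ext i j; exact Ideal.Quotient.eq_zero_iff_mem.mpr (hD i j)
  rw [← Ideal.Quotient.eq, RingHom.map_det, RingHom.map_det, RingHom.mapMatrix_apply,
    RingHom.mapMatrix_apply, fromBlocks_map, hB0, Matrix.map_sub _ (map_sub _), hD0,
    Matrix.map_one _ (map_zero _) (map_one _), sub_zero, det_fromBlocks_zero₁₂, det_one, mul_one]

theorem Ideal.exists_mem_annihilator_sub_det_mem {J : Ideal T} (hJ : J.FG) {m : ℕ}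
    {y : Fin m → T} (hy : J ≤ Ideal.span (Set.range y) ⊔ J ^ 2)
    {B : Matrix (Fin m) (Fin m) T} (hB : ∀ i, (B *ᵥ y) i ∈ J ^ 2) :
    ∃ d ∈ Submodule.annihilator J, d - B.det ∈ J := by
  obtain ⟨n, x, hx⟩ := Submodule.fg_iff_exists_fin_generating_family.mp hJ
  have hsq : J ^ 2 = J * Ideal.span (Set.range x) := by rw [Ideal.span, hx, sq]
  choose C hC hBC using fun i => exists_dotProduct_eq_of_mem_mul_span (hsq ▸ hB i)
  have hxy : ∀ k, ∃ (q : Fin m → T) (r : Fin n → T), (∀ i, r i ∈ J) ∧ q ⬝ᵥ y + r ⬝ᵥ x = x k := by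
    intro k
    have hxk : x k ∈ J := hx ▸ Submodule.subset_span (Set.mem_range_self k)
    obtain ⟨a, ha, b, hb, hab⟩ := Submodule.mem_sup.mp (hy hxk)
    obtain ⟨q, rfl⟩ := Ideal.mem_span_range_iff_exists_fun.mp ha
    obtain ⟨r, hr, rfl⟩ := exists_dotProduct_eq_of_mem_mul_span (hsq ▸ hb)
    exact ⟨q, r, hr, hab⟩
  choose Q R hR hQR using hxy
  let N : Matrix (Fin m ⊕ Fin n) (Fin m ⊕ Fin n) T := fromBlocks B (-of C) (-of Q) (1 - of R)
  have hN : N *ᵥ Sum.elim y x = 0 := by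
    have hBy : B *ᵥ y = of C *ᵥ x := funext fun i => (hBC i).symm
    have hxQ : x - of R *ᵥ x = of Q *ᵥ y := funext fun k => sub_eq_of_eq_add (hQR k).symm
    rw [fromBlocks_mulVec, Sum.elim_comp_inl, Sum.elim_comp_inr, neg_mulVec, neg_mulVec,
      sub_mulVec, one_mulVec, hBy, hxQ, add_neg_cancel, neg_add_cancel, Sum.elim_zero_zero]
  refine ⟨N.det, ?_, det_fromBlocks_one_sub_sub_det_mem B _ (fun i k => neg_mem (hC i k)) hR⟩
  rw [← hx, Submodule.mem_annihilator_span]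
  rintro ⟨_, k, rfl⟩
  exact det_mul_eq_zero_of_mulVec_eq_zero hN (Sum.inr k)

end DeterminantTrick

namespace Algebra.TensorProduct

theorem lmul'_algebraMap {A S : Type*} [CommRing A] [CommRing S] [Algebra A S] (s : S) :
    lmul' A (algebraMap S (S ⊗[A] S) s) = s := by
  simp [algebraMap_apply]

end Algebra.TensorProduct

namespace KaehlerDifferential

variable {A S : Type*} [CommRing A] [CommRing S] [Algebra A S]

theorem fromIdeal_eq_zero_iff (w : ideal A S) :
    fromIdeal A S w = 0 ↔ (w : S ⊗[A] S) ∈ ideal A S ^ 2 :=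
  Ideal.toCotangent_eq_zero _ w

theorem lmul'_smul (z : S ⊗[A] S) (ω : Ω[S⁄A]) :
    Algebra.TensorProduct.lmul' A z • ω = z • ω := by
  obtain ⟨w, rfl⟩ := fromIdeal_surjective A S ω
  rw [← algebraMap_smul (S ⊗[A] S), ← sub_eq_zero, ← sub_smul, ← map_smul,
    fromIdeal_eq_zero_iff, Submodule.coe_smul, smul_eq_mul, sq]
  refine Ideal.mul_mem_mul ?_ w.2
  rw [RingHom.mem_ker, map_sub, Algebra.TensorProduct.lmul'_algebraMap, sub_self]

theorem noetherDifferent_le_annihilator :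
    noetherDifferent A S ≤ Module.annihilator S Ω[S⁄A] := by
  rw [noetherDifferent, Ideal.map_le_iff_le_comap]
  intro ξ hξ
  rw [Ideal.mem_comap, Module.mem_annihilator]
  intro ω
  obtain ⟨w, rfl⟩ := fromIdeal_surjective A S ω
  have hξw : ξ • w = 0 := Subtype.ext (Submodule.mem_annihilator.mp hξ _ w.2)
  rw [AlgHom.toRingHom_eq_coe, RingHom.coe_coe, lmul'_smul, ← map_smul, hξw, map_zero]

theorem exists_span_eq_top_of_span_eq_ideal {n : ℕ} {x : Fin n → S ⊗[A] S}
    (hx : Ideal.span (Set.range x) = ideal A S) :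
    ∃ ω : Fin n → Ω[S⁄A], Submodule.span S (Set.range ω) = ⊤ := by
  have hxJ : ∀ k, x k ∈ ideal A S := fun k => hx ▸ Ideal.subset_span (Set.mem_range_self k)
  refine ⟨fun k => fromIdeal A S ⟨x k, hxJ k⟩, eq_top_iff.mpr fun ω _ => ?_⟩
  obtain ⟨w, rfl⟩ := fromIdeal_surjective A S ω
  have hw : (w : S ⊗[A] S) ∈ Ideal.span (Set.range x) := hx.symm ▸ w.2
  obtain ⟨c, hc⟩ := Ideal.mem_span_range_iff_exists_fun.mp hw
  have hwc : w = ∑ k, c k • ⟨x k, hxJ k⟩ := Subtype.ext (by simp [← hc])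
  rw [hwc, map_sum]
  refine Submodule.sum_mem _ fun k _ => ?_
  rw [map_smul, ← lmul'_smul]
  exact Submodule.smul_mem _ _ (Submodule.subset_span (Set.mem_range_self k))

theorem det_mem_noetherDifferent (hJ : (ideal A S).FG) {m : ℕ} {g : Fin m → Ω[S⁄A]}
    (hg : Submodule.span S (Set.range g) = ⊤) {B : Matrix (Fin m) (Fin m) S}
    (hB : ∀ i, ∑ l, B i l • g l = 0) : B.det ∈ noetherDifferent A S := by
  choose y hy using fun l => fromIdeal_surjective A S (g l)
  have fromIdeal_sum (q : Fin m → S) :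
      fromIdeal A S (∑ l, algebraMap S (S ⊗[A] S) (q l) • y l) = ∑ l, q l • g l := by
    rw [map_sum]
    exact Finset.sum_congr rfl fun l _ => by rw [map_smul, hy, algebraMap_smul]
  have hspan : ideal A S ≤ Ideal.span (Set.range fun l => (y l : S ⊗[A] S)) ⊔ ideal A S ^ 2 := by
    intro z hz
    obtain ⟨q, hq⟩ := (Submodule.mem_span_range_iff_exists_fun S).mp
      (hg ▸ Submodule.mem_top : fromIdeal A S ⟨z, hz⟩ ∈ Submodule.span S (Set.range g))
    rw [← fromIdeal_sum, eq_comm, ← sub_eq_zero, ← map_sub, fromIdeal_eq_zero_iff] at hq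
    simp only [Submodule.coe_sub, Submodule.coe_sum, Submodule.coe_smul, smul_eq_mul] at hq
    exact Submodule.mem_sup.mpr ⟨_, Ideal.mem_span_range_iff_exists_fun.mpr ⟨_, rfl⟩, _, hq,
      add_sub_cancel _ _⟩
  have hrel (i : Fin m) :
      (B.map (algebraMap S (S ⊗[A] S)) *ᵥ fun l => (y l : S ⊗[A] S)) i ∈ ideal A S ^ 2 := by
    have h := fromIdeal_sum (B i)
    rw [hB i, fromIdeal_eq_zero_iff] at h
    simpa [mulVec, dotProduct] using h
  obtain ⟨d, hd, hdB⟩ := Ideal.exists_mem_annihilator_sub_det_mem hJ hspan hrel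
  have hμd : Algebra.TensorProduct.lmul' A d = B.det := by
    have hdet : Algebra.TensorProduct.lmul' A (B.map (algebraMap S (S ⊗[A] S))).det = B.det := by
      rw [AlgHom.map_det, AlgHom.mapMatrix_apply, Matrix.map_map]
      congr 1
      ext i j
      exact Algebra.TensorProduct.lmul'_algebraMap (A := A) (B i j)
    rw [← sub_eq_zero, ← hdet, ← map_sub]
    exact hdB
  exact hμd ▸ Ideal.mem_map_of_mem _ hd

end KaehlerDifferential

/-- if the kernel of the multiplication map `μ : S ⊗[A] S → S` is generated
by `n` elements, then `𝔫_A(S)ⁿ ⊆ 𝔨_A(S) ⊆ 𝔫_A(S)`. -/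
theorem stmt19 (A S : Type) [CommRing A] [CommRing S] [Algebra A S] (n : ℕ)
    (hgen : ∃ g : Fin n → (S ⊗[A] S),
      Ideal.span (Set.range g) =
        RingHom.ker (Algebra.TensorProduct.lmul' A (S := S)).toRingHom) :
    noetherDifferent A S ^ n ≤ kaehlerDifferent A S ∧
      kaehlerDifferent A S ≤ noetherDifferent A S := by
  obtain ⟨x, hx⟩ := hgen
  have hJ : (KaehlerDifferential.ideal A S).FG :=
    Submodule.fg_iff_exists_fin_generating_family.mpr ⟨n, x, hx⟩
  obtain ⟨ω, hω⟩ := KaehlerDifferential.exists_span_eq_top_of_span_eq_ideal hx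
  exact ⟨(Ideal.pow_right_mono KaehlerDifferential.noetherDifferent_le_annihilator n).trans
      (annihilator_pow_le_fittingIdeal_zero ω hω),
    fittingIdeal_zero_le fun _ _ hg _ hB => KaehlerDifferential.det_mem_noetherDifferent hJ hg hB⟩
end
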